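/- arXiv:1102.2471 — 3 statements merged into one kernel-verified Lean document; each statement's English description precedes it below -/
import Mathlib

section
/- Let I ⊂ F[x_1,...,x_d] be a zero-dimensional ideal, and for each 1 ≤ i ≤ d let ≺_i be an elimination order for x_i and let G_i be the reduced Gröbner basis of I with respect to ≺_i. If the leading monomial sets LM_{≺_1}(G_1), ..., LM_{≺_d}(G_d) are all identical, then I has a unique reduced Gröbner basis, independent of the monomial order; that is, the reduced Gröbner bases of I with respect to any two monomial orders coincide. -/
/-!
An elimination order for `x_i` ranks monomials first by their `x_i`-degree. If `g ∈ G_i` has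
leading monomial `α`, the equality of the leading-monomial sets makes `g` the element of every
`G_j` with leading monomial `α`, so no monomial of `g` exceeds `α` in any variable: `α` is
divisible by every monomial of `g`, hence is its leading monomial for every monomial order.
Divisibility, minimality and reducedness then force any reduced basis `H` to have the same
leading-monomial set as `G_i`. Finally, two reduced Gröbner bases of one ideal with the same
leading-monomial set coincide: the difference of two elements with the same monic leading
monomial lies in the ideal, yet none of its monomials is divisible by a leading monomial.
-/

open MvPolynomial

/-- A monomial order on exponent vectors `Fin d →₀ ℕ`: a linear order in which `0` (i.e. the
monomial `1`) is least and which is compatible with addition of exponents (multiplication of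
monomials). -/
structure MonOrder (d : ℕ) where
  toLinearOrder : LinearOrder (Fin d →₀ ℕ)
  zero_le : ∀ a, toLinearOrder.le 0 a
  add_le_add : ∀ a b c, toLinearOrder.le a b → toLinearOrder.le (a + c) (b + c)

/-- `α` is the exponent of the leading monomial of `f` w.r.t. the monomial order `o`. -/
def MonOrder.IsLM {d : ℕ} {F : Type*} [CommSemiring F] (o : MonOrder d)
    (f : MvPolynomial (Fin d) F) (α : Fin d →₀ ℕ) : Prop :=
  α ∈ f.support ∧ ∀ β ∈ f.support, o.toLinearOrder.le β α
/-- `o` is an elimination order for the variable `x_i`: `x_i` is greater than every monomial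
in the remaining variables. -/
def MonOrder.IsElimFor {d : ℕ} (o : MonOrder d) (i : Fin d) : Prop :=
  ∀ β : Fin d →₀ ℕ, β i = 0 → o.toLinearOrder.lt β (Finsupp.single i 1)
/-- The set of leading monomials (exponents) of (nonzero) elements of `G`. -/
def LMset {d : ℕ} {F : Type*} [CommSemiring F] (o : MonOrder d)
    (G : Set (MvPolynomial (Fin d) F)) : Set (Fin d →₀ ℕ) :=
  {α | ∃ g ∈ G, o.IsLM g α}

/-- `G` is the reduced Gröbner basis of `I` w.r.t. the monomial order `o`: `G` is a finite set
of monic nonzero elements of `I` whose leading monomials minimally generate the monomial ideal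
generated by the leading monomials of nonzero elements of `I`, and no monomial appearing in some
`g ∈ G` other than its leading monomial is divisible by the leading monomial of an element
of `G`. -/
def IsReducedGB {d : ℕ} {F : Type*} [Field F] (o : MonOrder d)
    (I : Ideal (MvPolynomial (Fin d) F)) (G : Set (MvPolynomial (Fin d) F)) : Prop :=
  G.Finite ∧ G ⊆ (I : Set (MvPolynomial (Fin d) F)) ∧ (0 : MvPolynomial (Fin d) F) ∉ G ∧
  (∀ g ∈ G, ∀ α, o.IsLM g α → MvPolynomial.coeff α g = 1) ∧
  (∀ f ∈ I, f ≠ 0 → ∀ α, o.IsLM f α → ∃ g ∈ G, ∃ β, o.IsLM g β ∧ β ≤ α) ∧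
  (∀ g ∈ G, ∀ g' ∈ G, g ≠ g' → ∀ β β', o.IsLM g β → o.IsLM g' β' → ¬ β ≤ β') ∧
  (∀ g ∈ G, ∀ α ∈ g.support, ¬ o.IsLM g α → ∀ g' ∈ G, ∀ β, o.IsLM g' β → ¬ β ≤ α)

namespace MonOrder

variable {d : ℕ}

lemma le_of_le (o : MonOrder d) {a b : Fin d →₀ ℕ} (h : a ≤ b) : o.toLinearOrder.le a b := by
  obtain ⟨c, rfl⟩ := le_iff_exists_add.mp h
  simpa [add_comm] using o.add_le_add 0 c a (o.zero_le c)

lemma add_lt_add_right (o : MonOrder d) {a b : Fin d →₀ ℕ} (h : o.toLinearOrder.lt a b)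
    (c : Fin d →₀ ℕ) : o.toLinearOrder.lt (a + c) (b + c) := by
  obtain ⟨hab, hba⟩ := (o.toLinearOrder.lt_iff_le_not_ge a b).mp h
  refine (o.toLinearOrder.lt_iff_le_not_ge _ _).mpr ⟨o.add_le_add a b c hab, fun h' => hba ?_⟩
  obtain rfl := add_right_cancel (o.toLinearOrder.le_antisymm _ _ (o.add_le_add a b c hab) h')
  exact o.toLinearOrder.le_refl a

lemma IsElimFor.lt_of_apply_lt {o : MonOrder d} {i : Fin d} (ho : o.IsElimFor i)
    {α μ : Fin d →₀ ℕ} (h : α i < μ i) : o.toLinearOrder.lt α μ := by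
  have hlt :=
    o.add_lt_add_right (ho (Finsupp.erase i α) Finsupp.erase_same) (Finsupp.single i (α i))
  rw [add_comm, Finsupp.single_add_erase, ← Finsupp.single_add, add_comm] at hlt
  refine @lt_of_lt_of_le _ o.toLinearOrder.toPreorder _ _ _ hlt (o.le_of_le fun j => ?_)
  rcases eq_or_ne i j with rfl | hij
  · simpa using h
  · simp [hij]

variable {F : Type*} [CommSemiring F]

lemma exists_isLM (o : MonOrder d) {f : MvPolynomial (Fin d) F} (hf : f ≠ 0) :
    ∃ α, o.IsLM f α := by
  obtain ⟨α, hα, hmax⟩ :=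
    @Finset.exists_max_image _ _ o.toLinearOrder f.support id (support_nonempty.mpr hf)
  exact ⟨α, hα, hmax⟩

lemma IsLM.unique {o : MonOrder d} {f : MvPolynomial (Fin d) F} {α β : Fin d →₀ ℕ}
    (hα : o.IsLM f α) (hβ : o.IsLM f β) : α = β :=
  o.toLinearOrder.le_antisymm _ _ (hβ.2 α hα.1) (hα.2 β hβ.1)

lemma isLM_of_forall_le (o : MonOrder d) {f : MvPolynomial (Fin d) F} {α : Fin d →₀ ℕ}
    (hα : α ∈ f.support) (hle : ∀ μ ∈ f.support, μ ≤ α) : o.IsLM f α :=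
  ⟨hα, fun μ hμ => o.le_of_le (hle μ hμ)⟩

lemma forall_le_of_isLM_elim {e : Fin d → MonOrder d} (helim : ∀ i, (e i).IsElimFor i)
    {f : MvPolynomial (Fin d) F} {α : Fin d →₀ ℕ} (hLM : ∀ i, (e i).IsLM f α) :
    ∀ μ ∈ f.support, μ ≤ α := by
  intro μ hμ i
  by_contra! hi
  exact (((e i).toLinearOrder.lt_iff_le_not_ge _ _).mp ((helim i).lt_of_apply_lt hi)).2
    ((hLM i).2 μ hμ)

end MonOrder

namespace IsReducedGB

variable {d : ℕ} {F : Type*} [Field F] {I : Ideal (MvPolynomial (Fin d) F)}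
  {o o' : MonOrder d} {H H' : Set (MvPolynomial (Fin d) F)}

lemma ne_zero (hH : IsReducedGB o I H) {g : MvPolynomial (Fin d) F} (hg : g ∈ H) : g ≠ 0 :=
  fun h => hH.2.2.1 (h ▸ hg)

lemma exists_isLM_le (hH : IsReducedGB o I H) {f : MvPolynomial (Fin d) F} (hf : f ∈ I)
    (hf0 : f ≠ 0) {α : Fin d →₀ ℕ} (hα : o.IsLM f α) : ∃ g ∈ H, ∃ β, o.IsLM g β ∧ β ≤ α :=
  hH.2.2.2.2.1 f hf hf0 α hα

lemma eq_of_isLM_le (hH : IsReducedGB o I H) {g g' : MvPolynomial (Fin d) F}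
    (hg : g ∈ H) (hg' : g' ∈ H) {β β' : Fin d →₀ ℕ} (hβ : o.IsLM g β) (hβ' : o.IsLM g' β')
    (hle : β ≤ β') : g = g' := by
  by_contra hne
  exact hH.2.2.2.2.2.1 g hg g' hg' hne β β' hβ hβ' hle

lemma isLM_of_le (hH : IsReducedGB o I H) {g g' : MvPolynomial (Fin d) F} (hg : g ∈ H)
    (hg' : g' ∈ H) {α β : Fin d →₀ ℕ} (hα : α ∈ g.support) (hβ : o.IsLM g' β) (hle : β ≤ α) :
    o.IsLM g α := by
  by_contra hne
  exact hH.2.2.2.2.2.2 g hg α hα hne g' hg' β hβ hle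

lemma eq_of_isLM (hH : IsReducedGB o I H) (hH' : IsReducedGB o' I H')
    (hS : LMset o H = LMset o' H') {g g' : MvPolynomial (Fin d) F} {α : Fin d →₀ ℕ}
    (hg : g ∈ H) (hg' : g' ∈ H') (hα : o.IsLM g α) (hα' : o'.IsLM g' α) : g = g' := by
  by_contra hne
  have hf0 : g - g' ≠ 0 := sub_ne_zero.mpr hne
  obtain ⟨τ, hτ⟩ := o.exists_isLM hf0
  obtain ⟨h, hh, β, hβ, hβτ⟩ := hH.exists_isLM_le (I.sub_mem (hH.2.1 hg) (hH'.2.1 hg')) hf0 hτ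
  have hτα : τ ≠ α := by
    rintro rfl
    have := mem_support_iff.mp hτ.1
    rw [coeff_sub, hH.2.2.2.1 g hg τ hα, hH'.2.2.2.1 g' hg' τ hα', sub_self] at this
    exact this rfl
  rcases Finset.mem_union.mp (support_sub _ _ _ hτ.1) with hτg | hτg'
  · exact hτα ((hH.isLM_of_le hg hh hτg hβ hβτ).unique hα)
  · obtain ⟨h', hh', hβ'⟩ : β ∈ LMset o' H' := hS ▸ ⟨h, hh, hβ⟩
    exact hτα ((hH'.isLM_of_le hg' hh' hτg' hβ' hβτ).unique hα')

lemma mem_and_isLM_of_LMset_eq (hH : IsReducedGB o I H) (hH' : IsReducedGB o' I H')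
    (hS : LMset o H = LMset o' H') {g : MvPolynomial (Fin d) F} {α : Fin d →₀ ℕ}
    (hg : g ∈ H) (hα : o.IsLM g α) : g ∈ H' ∧ o'.IsLM g α := by
  obtain ⟨g', hg', hα'⟩ : α ∈ LMset o' H' := hS ▸ ⟨g, hg, hα⟩
  obtain rfl := hH.eq_of_isLM hH' hS hg hg' hα hα'
  exact ⟨hg', hα'⟩

lemma subset_of_LMset_eq (hH : IsReducedGB o I H) (hH' : IsReducedGB o' I H')
    (hS : LMset o H = LMset o' H') : H ⊆ H' := by
  intro g hg
  obtain ⟨α, hα⟩ := o.exists_isLM (hH.ne_zero hg)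
  exact (hH.mem_and_isLM_of_LMset_eq hH' hS hg hα).1

lemma eq_of_LMset_eq (hH : IsReducedGB o I H) (hH' : IsReducedGB o' I H')
    (hS : LMset o H = LMset o' H') : H = H' :=
  (hH.subset_of_LMset_eq hH' hS).antisymm (hH'.subset_of_LMset_eq hH hS.symm)

variable {o₀ : MonOrder d} {S : Set (MvPolynomial (Fin d) F)}

lemma LMset_subset_of_forall_le (hH : IsReducedGB o I H) (hS : IsReducedGB o₀ I S)
    (hdom : ∀ g ∈ S, ∀ α, o₀.IsLM g α → ∀ μ ∈ g.support, μ ≤ α) :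
    LMset o H ⊆ LMset o₀ S := by
  rintro β ⟨h, hh, hβ⟩
  obtain ⟨τ, hτ⟩ := o₀.exists_isLM (hH.ne_zero hh)
  obtain ⟨g, hg, α, hα, hατ⟩ := hS.exists_isLM_le (hH.2.1 hh) (hH.ne_zero hh) hτ
  have hgo : o.IsLM g α := o.isLM_of_forall_le hα.1 (hdom g hg α hα)
  obtain ⟨h', hh', β', hβ', hβ'α⟩ := hH.exists_isLM_le (hS.2.1 hg) (hS.ne_zero hg) hgo
  obtain rfl : τ = β := (hH.isLM_of_le hh hh' hτ.1 hβ' (hβ'α.trans hατ)).unique hβ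
  obtain rfl : h' = h := hH.eq_of_isLM_le hh' hh hβ' hβ (hβ'α.trans hατ)
  obtain rfl := hβ'.unique hβ
  obtain rfl := le_antisymm hατ hβ'α
  exact ⟨g, hg, hα⟩

lemma LMset_eq_of_forall_le (hH : IsReducedGB o I H) (hS : IsReducedGB o₀ I S)
    (hdom : ∀ g ∈ S, ∀ α, o₀.IsLM g α → ∀ μ ∈ g.support, μ ≤ α) :
    LMset o H = LMset o₀ S := by
  refine (hH.LMset_subset_of_forall_le hS hdom).antisymm ?_
  rintro α ⟨g, hg, hα⟩
  have hgo : o.IsLM g α := o.isLM_of_forall_le hα.1 (hdom g hg α hα)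
  obtain ⟨h, hh, β, hβ, hβα⟩ := hH.exists_isLM_le (hS.2.1 hg) (hS.ne_zero hg) hgo
  obtain ⟨g', hg', hβ'⟩ := hH.LMset_subset_of_forall_le hS hdom ⟨h, hh, hβ⟩
  obtain rfl : g' = g := hS.eq_of_isLM_le hg' hg hβ' hα hβα
  obtain rfl := hβ'.unique hα
  exact ⟨h, hh, hβ⟩

end IsReducedGB

theorem stmt6_general {F : Type*} [Field F] {d : ℕ}
    (I : Ideal (MvPolynomial (Fin d) F))
    (e : Fin d → MonOrder d) (helim : ∀ i : Fin d, (e i).IsElimFor i)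
    (G : Fin d → Set (MvPolynomial (Fin d) F)) (hG : ∀ i, IsReducedGB (e i) I (G i))
    (hLM : ∀ i j : Fin d, LMset (e i) (G i) = LMset (e j) (G j)) :
    ∀ (o o' : MonOrder d) (H H' : Set (MvPolynomial (Fin d) F)),
      IsReducedGB o I H → IsReducedGB o' I H' → H = H' := by
  intro o o' H H' hH hH'
  obtain ⟨o₀, S, hS, hdom⟩ : ∃ (o₀ : MonOrder d) (S : Set (MvPolynomial (Fin d) F)),
      IsReducedGB o₀ I S ∧ ∀ g ∈ S, ∀ α, o₀.IsLM g α → ∀ μ ∈ g.support, μ ≤ α := by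
    rcases isEmpty_or_nonempty (Fin d) with hd | ⟨⟨i₀⟩⟩
    · -- with no variables, `1` is the only monomial
      exact ⟨o, H, hH, fun _ _ _ _ μ _ => (Subsingleton.elim μ _).le⟩
    · refine ⟨e i₀, G i₀, hG i₀, fun g hg α hα => MonOrder.forall_le_of_isLM_elim helim ?_⟩
      exact fun i => ((hG i₀).mem_and_isLM_of_LMset_eq (hG i) (hLM i₀ i) hg hα).2
  exact hH.eq_of_LMset_eq hH'
    ((hH.LMset_eq_of_forall_le hS hdom).trans (hH'.LMset_eq_of_forall_le hS hdom).symm)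

/-- Corollary 3.1. Let `I` be a zero-dimensional ideal and, for each `i`, let
`≺ᵢ` be an elimination order for `xᵢ` and `Gᵢ` the reduced Gröbner basis of `I` w.r.t. `≺ᵢ`.
If the leading-monomial sets `LM_≺ᵢ(Gᵢ)` are all identical, then `I` has a unique reduced
Gröbner basis, independent of the monomial order. -/
theorem stmt6 {F : Type*} [Field F] [CharZero F] {d : ℕ}
    (I : Ideal (MvPolynomial (Fin d) F))
    (hzero : FiniteDimensional F (MvPolynomial (Fin d) F ⧸ I))
    (e : Fin d → MonOrder d) (helim : ∀ i : Fin d, (e i).IsElimFor i)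
    (G : Fin d → Set (MvPolynomial (Fin d) F)) (hG : ∀ i, IsReducedGB (e i) I (G i))
    (hLM : ∀ i j : Fin d, LMset (e i) (G i) = LMset (e j) (G j)) :
    ∀ (o o' : MonOrder d) (H H' : Set (MvPolynomial (Fin d) F)),
      IsReducedGB o I H → IsReducedGB o' I H' → H = H' :=
  stmt6_general I e helim G hG hLM
end

section
/- Let Ξ ⊂ F^d be an A-Cartesian set and let N = {x^α : α ∈ A}. Then the vanishing ideal I(Ξ) has a unique monomial order quotient basis, and this unique monomial order quotient basis is N. -/
open MvPolynomial

/-- `O` (a set of exponent vectors) is a monomial order quotient basis for `I`: it is a finite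
order ideal (lower set of exponents) whose monomials give an `F`-vector space basis of
`F[x]/I`. -/
def IsMOQB {d : ℕ} {F : Type*} [Field F] (I : Ideal (MvPolynomial (Fin d) F))
    (O : Set (Fin d →₀ ℕ)) : Prop :=
  O.Finite ∧ IsLowerSet O ∧
  LinearIndependent F (fun t : O => Ideal.Quotient.mk I (monomial (t : Fin d →₀ ℕ) (1 : F))) ∧
  Submodule.span F
    (Set.range fun t : O => Ideal.Quotient.mk I (monomial (t : Fin d →₀ ℕ) (1 : F))) = ⊤
noncomputable def vanishIdeal {d : ℕ} {F : Type*} [Field F] (Ξ : Set (Fin d → F)) :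
    Ideal (MvPolynomial (Fin d) F) :=
  ⨅ ξ ∈ Ξ, RingHom.ker (MvPolynomial.eval ξ)
/-- `Ξ` is the `A`-Cartesian set determined by the lower set `A ⊆ ℕ^d` and the injective
functions `y i : ℕ → F`. -/
def IsCartesianWith {d : ℕ} {F : Type*} (A : Set (Fin d → ℕ)) (y : Fin d → ℕ → F)
    (Ξ : Set (Fin d → F)) : Prop :=
  IsLowerSet A ∧ (∀ i, Function.Injective (y i)) ∧
  Ξ = (fun α : Fin d → ℕ => fun i => y i (α i)) '' A

def IsCartesian {d : ℕ} {F : Type*} (Ξ : Set (Fin d → F)) : Prop :=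
  ∃ (A : Set (Fin d → ℕ)) (y : Fin d → ℕ → F), IsCartesianWith A y Ξ

/-!
For `β ∉ N` the Newton polynomial `∏ i, ∏ k < β i, (X i - y i k)` vanishes on `Ξ`: the point
with exponent `γ ∈ N` kills it unless `β ≤ γ`, which is impossible because `N` is a lower set.
It is `x^β` plus monomials strictly below `β`, so modulo `I(Ξ)` every monomial outside `N`
reduces to smaller ones and the `N`-monomials span `F[x]/I(Ξ)`. The Newton polynomials indexed by
`N` take triangular values on `Ξ`, hence are independent modulo `I(Ξ)`; thus the dimension is at
least `|N|` and the `N`-monomials form a basis. If `O` is another monomial order quotient basis,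
the reduction of `x^β` for `β ∈ O \ N` would stay inside the lower set `O`, so `O ⊆ N`, and a
proper subset of the basis `N` cannot span.
-/

open Submodule Set

section NewtonPoly

variable {σ R : Type*}

def cartesianPoint (y : σ → ℕ → R) (γ : σ →₀ ℕ) : σ → R :=
  fun i => y i (γ i)

lemma cartesianPoint_injective {y : σ → ℕ → R} (hy : ∀ i, Function.Injective (y i)) :
    Function.Injective (cartesianPoint y) :=
  fun _ _ h => Finsupp.ext fun i => hy i (congr_fun h i)

variable [Fintype σ] [CommRing R]

noncomputable def newtonPoly (y : σ → ℕ → R) (β : σ →₀ ℕ) : MvPolynomial σ R :=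
  ∏ i, ∏ k ∈ Finset.range (β i), (X i - C (y i k))

variable {y : σ → ℕ → R} {β γ δ : σ →₀ ℕ}

lemma eval_newtonPoly :
    eval (cartesianPoint y γ) (newtonPoly y β) =
      ∏ i, ∏ k ∈ Finset.range (β i), (y i (γ i) - y i k) := by
  simp [newtonPoly, cartesianPoint]

lemma eval_newtonPoly_eq_zero_of_not_le (h : ¬ β ≤ γ) :
    eval (cartesianPoint y γ) (newtonPoly y β) = 0 := by
  obtain ⟨i, hi⟩ := not_forall.1 (mt Finsupp.le_def.2 h)
  rw [eval_newtonPoly]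
  exact Finset.prod_eq_zero (Finset.mem_univ i)
    (Finset.prod_eq_zero (Finset.mem_range.2 (not_le.1 hi)) (sub_self _))

lemma eval_newtonPoly_self_ne_zero [IsDomain R] (hy : ∀ i, Function.Injective (y i)) :
    eval (cartesianPoint y β) (newtonPoly y β) ≠ 0 := by
  rw [eval_newtonPoly]
  refine Finset.prod_ne_zero_iff.2 fun i _ => Finset.prod_ne_zero_iff.2 fun k hk => ?_
  exact sub_ne_zero.2 fun h => (Finset.mem_range.1 hk).ne' (hy i h)

lemma le_of_mem_support_newtonPoly (h : δ ∈ (newtonPoly y β).support) : δ ≤ β := by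
  classical
  cases subsingleton_or_nontrivial R
  · simp [Subsingleton.elim (newtonPoly y β) 0] at h
  refine Finsupp.le_def.2 fun i => (monomial_le_degreeOf i h).trans ?_
  have hfactor : ∀ j k, degreeOf i (X j - C (y j k)) ≤ if i = j then 1 else 0 := fun j k => by
    simpa [degreeOf_X, degreeOf_C] using degreeOf_sub_le i (X j) (C (y j k))
  calc degreeOf i (newtonPoly y β)
      ≤ ∑ j, ∑ k ∈ Finset.range (β j), degreeOf i (X j - C (y j k)) :=
        (degreeOf_prod_le _ _ _).trans (Finset.sum_le_sum fun j _ => degreeOf_prod_le _ _ _)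
    _ ≤ ∑ j, ∑ k ∈ Finset.range (β j), if i = j then 1 else 0 := by
        gcongr with j _ k
        exact hfactor j k
    _ = β i := by simp

lemma MonomialOrder.monic_newtonPoly (m : MonomialOrder σ) : m.Monic (newtonPoly y β) :=
  Monic.prod fun i _ => Monic.prod fun k _ => m.monic_X_sub_C i (y i k)

lemma MonomialOrder.degree_newtonPoly [Nontrivial R] (m : MonomialOrder σ) :
    m.degree (newtonPoly y β) = β := by
  have hreg : ∀ {p : MvPolynomial σ R}, m.Monic p → IsRegular (m.leadingCoeff p) :=
    fun hp => hp.leadingCoeff_eq_one ▸ isRegular_one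
  rw [newtonPoly,
    degree_prod_of_regular fun i _ => hreg (Monic.prod fun k _ => m.monic_X_sub_C _ _)]
  simp_rw [degree_prod_of_regular fun k _ => hreg (m.monic_X_sub_C _ _), m.degree_X_sub_C]
  simp [Finsupp.smul_single, Finsupp.univ_sum_single]

-- Any monomial order computes this coefficient; the lexicographic one needs an order on `σ`.
lemma coeff_newtonPoly_self [LinearOrder σ] : coeff β (newtonPoly y β) = 1 := by
  nontriviality R
  simpa [MonomialOrder.degree_newtonPoly] using
    (MonomialOrder.lex.monic_newtonPoly (y := y) (β := β)).coeff_degree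

lemma support_monomial_sub_newtonPoly [LinearOrder σ] :
    ↑(monomial β 1 - newtonPoly y β).support ⊆ Iio β := by
  intro δ hδ
  rw [Finset.mem_coe, mem_support_iff, coeff_sub, coeff_monomial] at hδ
  by_cases h : β = δ
  · subst h; simp [coeff_newtonPoly_self] at hδ
  · rw [if_neg h, zero_sub, neg_ne_zero] at hδ
    exact lt_of_le_of_ne (le_of_mem_support_newtonPoly (mem_support_iff.2 hδ)) (Ne.symm h)

end NewtonPoly

section MonomialClasses

variable {σ F : Type*} [Field F] (I : Ideal (MvPolynomial σ F))

noncomputable abbrev monomialMod (δ : σ →₀ ℕ) : MvPolynomial σ F ⧸ I :=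
  Ideal.Quotient.mk I (monomial δ 1)

variable {I}

lemma mk_mem_span_monomialMod {s : Set (σ →₀ ℕ)} {p : MvPolynomial σ F}
    (hp : ↑p.support ⊆ s) : Ideal.Quotient.mk I p ∈ span F (monomialMod I '' s) := by
  have hmem : p ∈ span F ((monomial · 1) '' s) := restrictSupport_eq_span F s ▸ hp
  have := mem_map_of_mem (f := (Ideal.Quotient.mkₐ F I).toLinearMap) hmem
  rwa [← span_image, image_image] at this

lemma span_monomialMod_eq_top_of_reduces {N : Set (σ →₀ ℕ)}
    (hred : ∀ β ∉ N, monomialMod I β ∈ span F (monomialMod I '' Iio β)) :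
    span F (monomialMod I '' N) = ⊤ := by
  have hmono : ∀ β, monomialMod I β ∈ span F (monomialMod I '' N) := fun β => by
    induction β using WellFoundedLT.induction with
    | _ β ih =>
      by_cases hβ : β ∈ N
      · exact subset_span (mem_image_of_mem _ hβ)
      · exact span_le.2 (image_subset_iff.2 ih) (hred β hβ)
  refine eq_top_iff'.2 fun q => ?_
  obtain ⟨p, rfl⟩ := Ideal.Quotient.mk_surjective q
  exact span_le.2 (image_subset_iff.2 fun β _ => hmono β) (mk_mem_span_monomialMod (subset_univ _))

end MonomialClasses

section QuotientBases

variable {F : Type*} [Field F] {d : ℕ} {I : Ideal (MvPolynomial (Fin d) F)}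
  {N O : Set (Fin d →₀ ℕ)}

lemma isMOQB_iff : IsMOQB I O ↔ O.Finite ∧ IsLowerSet O ∧ LinearIndepOn F (monomialMod I) O ∧
    span F (monomialMod I '' O) = ⊤ := by
  rw [IsMOQB, image_eq_range]
  rfl

theorem isMOQB_of_reduces (hfin : N.Finite) (hN : IsLowerSet N)
    (hred : ∀ β ∉ N, monomialMod I β ∈ span F (monomialMod I '' Iio β))
    {v : (Fin d →₀ ℕ) → MvPolynomial (Fin d) F ⧸ I} (hv : LinearIndepOn F v N) :
    IsMOQB I N := by
  have hspan := span_monomialMod_eq_top_of_reduces hred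
  have : Fintype N := hfin.fintype
  have : Module.Finite F (MvPolynomial (Fin d) F ⧸ I) := ⟨hspan ▸ fg_span (hfin.image _)⟩
  refine isMOQB_iff.2 ⟨hfin, hN, ?_, hspan⟩
  exact linearIndependent_of_top_le_span_of_card_le_finrank (by rw [← image_eq_range, hspan])
    hv.fintype_card_le_finrank

theorem IsMOQB.eq_of_reduces (hO : IsMOQB I O) (hN : IsMOQB I N)
    (hred : ∀ β ∉ N, monomialMod I β ∈ span F (monomialMod I '' Iio β)) : O = N := by
  obtain ⟨-, hOlow, hOind, hOspan⟩ := isMOQB_iff.1 hO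
  have hNind := (isMOQB_iff.1 hN).2.2.1
  have hON : O ⊆ N := fun β hβO => by_contra fun hβN => hOind.notMem_span hβO <|
    span_mono (image_mono (show Iio β ⊆ O \ {β} from
      fun δ hδ => ⟨hOlow (le_of_lt hδ) hβO, ne_of_lt hδ⟩)) (hred β hβN)
  refine hON.antisymm fun β hβN => by_contra fun hβO => hNind.notMem_span hβN ?_
  exact span_mono (image_mono (show O ⊆ N \ {β} from fun δ hδ => ⟨hON hδ, fun h => hβO (h ▸ hδ)⟩))
    (hOspan ▸ mem_top)

end QuotientBases

section CartesianSets

variable {F : Type*} [Field F] {d : ℕ} {y : Fin d → ℕ → F} {N : Set (Fin d →₀ ℕ)}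
  {β : Fin d →₀ ℕ}

lemma mem_vanishIdeal_iff {Ξ : Set (Fin d → F)} {p : MvPolynomial (Fin d) F} :
    p ∈ vanishIdeal Ξ ↔ ∀ ξ ∈ Ξ, eval ξ p = 0 := by
  simp [vanishIdeal, RingHom.mem_ker]

lemma newtonPoly_mem_vanishIdeal (hN : IsLowerSet N) (hβ : β ∉ N) :
    newtonPoly y β ∈ vanishIdeal (cartesianPoint y '' N) := by
  refine mem_vanishIdeal_iff.2 ?_
  rintro _ ⟨γ, hγ, rfl⟩
  exact eval_newtonPoly_eq_zero_of_not_le fun h => hβ (hN h hγ)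

lemma monomialMod_mem_span_Iio (hN : IsLowerSet N) (hβ : β ∉ N) :
    monomialMod (vanishIdeal (cartesianPoint y '' N)) β ∈
      span F (monomialMod (vanishIdeal (cartesianPoint y '' N)) '' Iio β) := by
  have hmod : monomialMod (vanishIdeal (cartesianPoint y '' N)) β =
      Ideal.Quotient.mk _ (monomial β 1 - newtonPoly y β) :=
    Ideal.Quotient.eq.2 (by simpa using newtonPoly_mem_vanishIdeal hN hβ)
  rw [hmod]
  exact mk_mem_span_monomialMod support_monomial_sub_newtonPoly

lemma linearIndepOn_mk_newtonPoly (hy : ∀ i, Function.Injective (y i)) :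
    LinearIndepOn F
      (fun α => Ideal.Quotient.mk (vanishIdeal (cartesianPoint y '' N)) (newtonPoly y α)) N := by
  rw [linearIndepOn_iff]
  intro l hlN hl
  by_contra hl0
  obtain ⟨α, hα, hmin⟩ := l.support.finite_toSet.exists_minimal (by simpa using hl0)
  have hvan : (l.sum fun β c => c • newtonPoly y β) ∈ vanishIdeal (cartesianPoint y '' N) := by
    rw [← Ideal.Quotient.eq_zero_iff_mem, ← hl, Finsupp.linearCombination_apply, map_finsuppSum]
    simp only [← Ideal.Quotient.mkₐ_eq_mk F, map_smul]
  have heval := mem_vanishIdeal_iff.1 hvan _ (mem_image_of_mem _ (hlN hα))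
  rw [Finsupp.sum, map_sum, Finset.sum_eq_single α] at heval
  · rw [smul_eval] at heval
    exact mul_ne_zero (Finsupp.mem_support_iff.1 hα) (eval_newtonPoly_self_ne_zero hy) heval
  · intro β hβ hne
    rw [smul_eval]
    exact mul_eq_zero_of_right _ <|
      eval_newtonPoly_eq_zero_of_not_le fun hle => hne (le_antisymm hle (hmin hβ hle))
  · exact fun h => absurd hα h

end CartesianSets

theorem stmt10_general {F : Type*} [Field F] {d : ℕ}
    (A : Set (Fin d → ℕ)) (y : Fin d → ℕ → F) (Ξ : Set (Fin d → F))
    (hfin : Ξ.Finite) (hcart : IsCartesianWith A y Ξ) :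
    IsMOQB (vanishIdeal Ξ) ((fun α : Fin d → ℕ => Finsupp.equivFunOnFinite.symm α) '' A) ∧
    ∀ O : Set (Fin d →₀ ℕ), IsMOQB (vanishIdeal Ξ) O →
      O = (fun α : Fin d → ℕ => Finsupp.equivFunOnFinite.symm α) '' A := by
  obtain ⟨hA, hy, rfl⟩ := hcart
  set N := (fun α : Fin d → ℕ => Finsupp.equivFunOnFinite.symm α) '' A
  have hN_eq : N = (⇑) ⁻¹' A := Finsupp.equivFunOnFinite.image_symm_eq_preimage A
  have hN : IsLowerSet N := hN_eq ▸ hA.preimage fun _ _ => Finsupp.coe_le_coe.2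
  have hΞ : (fun α i => y i (α i)) '' A = cartesianPoint y '' N := by
    rw [image_image]
    rfl
  rw [hΞ] at hfin ⊢
  have hred (β) (hβ : β ∉ N) := monomialMod_mem_span_Iio (y := y) hN hβ
  have hNbasis := isMOQB_of_reduces (hfin.of_finite_image (cartesianPoint_injective hy).injOn) hN
    hred (linearIndepOn_mk_newtonPoly hy)
  exact ⟨hNbasis, fun O hO => hO.eq_of_reduces hNbasis hred⟩

/-- Proposition 3.2. If `Ξ ⊆ F^d` is an `A`-Cartesian set, then the
vanishing ideal `I(Ξ)` has a unique monomial order quotient basis, namely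
`N = {x^α : α ∈ A}`. -/
theorem stmt10 {F : Type*} [Field F] [CharZero F] {d : ℕ}
    (A : Set (Fin d → ℕ)) (y : Fin d → ℕ → F) (Ξ : Set (Fin d → F))
    (hfin : Ξ.Finite) (hcart : IsCartesianWith A y Ξ) :
    IsMOQB (vanishIdeal Ξ) ((fun α : Fin d → ℕ => Finsupp.equivFunOnFinite.symm α) '' A) ∧
    ∀ O : Set (Fin d →₀ ℕ), IsMOQB (vanishIdeal Ξ) O →
      O = (fun α : Fin d → ℕ => Finsupp.equivFunOnFinite.symm α) '' A :=
  stmt10_general A y Ξ hfin hcart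
end

section
/- For d ≥ 3, let Ξ_d ⊂ F^d be the four-point set {(0,0,0,0,...,0), (0,1,0,0,...,0), (0,0,1,0,...,0), (1,0,1,0,...,0)} (the last d−3 coordinates of each point being zero). Then Ξ_d is not a Cartesian set, and the vanishing ideal I(Ξ_d) has a unique monomial order quotient basis, namely {1, x_1, x_2, x_3}. -/
open MvPolynomial

/-!
Evaluation at the points embeds `F[x]/I(Ξ)` into `F^Ξ`, and on the four points the monomials
`1, x₁, x₂, x₃` evaluate to a triangular system, so they form a basis.

If two points of `Ξ` differ only in the coordinate `i`, "evaluate at one minus evaluate at the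
other" is a nonzero functional on `F[x]/I(Ξ)` that kills every monomial free of `x_i`. A lower set
of monomials spanning `F[x]/I(Ξ)` therefore contains `x_i`; the pairs `(0, e₂)`, `(0, e₃)` and
`(e₃, e₁ + e₃)` force `x₂, x₃, x₁`. A linearly independent set containing a basis is that basis.

A Cartesian set is closed under resetting a coordinate `i` to `y_i(0)`. Resetting the third
coordinate of `(1, 0, 1)` and of `(0, 1, 0)` to the same value `c` stays inside `Ξ` only if `c = 1`
and `c = 0`.
-/

theorem Submodule.span_eq_top_of_injective_of_span_comp {R M N ι : Type*} [Semiring R]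
    [AddCommMonoid M] [AddCommMonoid N] [Module R M] [Module R N] {f : M →ₗ[R] N}
    (hf : Function.Injective f) {v : ι → M} (h : Submodule.span R (Set.range (f ∘ v)) = ⊤) :
    Submodule.span R (Set.range v) = ⊤ := by
  have hmap : (Submodule.span R (Set.range v)).map f = ⊤ := by
    rw [Submodule.map_span, ← Set.range_comp, h]
  apply Submodule.map_injective_of_injective hf
  rw [hmap, Submodule.map_top, eq_comm, LinearMap.range_eq_top]
  exact LinearMap.range_eq_top.1 (top_le_iff.1 (hmap ▸ LinearMap.map_le_range))

theorem LinearIndepOn.eq_of_subset_of_span_eq_top {K V ι : Type*} [DivisionRing K]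
    [AddCommGroup V] [Module K V] {f : ι → V} {s t : Set ι} (hli : LinearIndepOn K f t)
    (hst : s ⊆ t) (hs : Submodule.span K (f '' s) = ⊤) : t = s := by
  refine Set.Subset.antisymm (fun a ha => ?_) hst
  by_contra has
  have hli' : LinearIndepOn K f (t \ {a}) := hli.mono Set.sdiff_subset
  have hspan : f a ∈ Submodule.span K (f '' (t \ {a})) :=
    Submodule.span_mono (Set.image_mono (Set.subset_sdiff_singleton hst has))
      (hs ▸ Submodule.mem_top)
  exact (hli'.notMem_span_iff.2 ⟨by simpa [ha] using hli, by simp⟩) hspan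

section VanishingIdeal

variable {F : Type*} [Field F] {d : ℕ}

theorem vanishIdeal_le_ker_eval {Ξ : Set (Fin d → F)} {ξ : Fin d → F} (hξ : ξ ∈ Ξ) :
    vanishIdeal Ξ ≤ RingHom.ker (eval ξ) :=
  iInf₂_le ξ hξ

noncomputable def quotEval (Ξ : Set (Fin d → F)) {ξ : Fin d → F} (hξ : ξ ∈ Ξ) :
    (MvPolynomial (Fin d) F ⧸ vanishIdeal Ξ) →ₐ[F] F :=
  Ideal.Quotient.liftₐ _ (aeval ξ) fun p hp => by
    simpa [coe_aeval_eq_eval] using vanishIdeal_le_ker_eval hξ hp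

@[simp]
theorem quotEval_mk {Ξ : Set (Fin d → F)} {ξ : Fin d → F} (hξ : ξ ∈ Ξ)
    (p : MvPolynomial (Fin d) F) : quotEval Ξ hξ (Ideal.Quotient.mk _ p) = eval ξ p := by
  simp [quotEval, Ideal.Quotient.liftₐ_apply, coe_aeval_eq_eval]

noncomputable def rangeEval {ι : Type*} (p : ι → Fin d → F) :
    (MvPolynomial (Fin d) F ⧸ vanishIdeal (Set.range p)) →ₐ[F] (ι → F) :=
  AlgHom.pi fun j => quotEval _ (Set.mem_range_self j)

@[simp]
theorem rangeEval_mk {ι : Type*} (p : ι → Fin d → F) (q : MvPolynomial (Fin d) F) :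
    rangeEval p (Ideal.Quotient.mk _ q) = fun j => eval (p j) q := by
  ext j
  simp [rangeEval]

theorem rangeEval_injective {ι : Type*} (p : ι → Fin d → F) :
    Function.Injective (rangeEval p) := by
  rw [injective_iff_map_eq_zero]
  intro a ha
  obtain ⟨q, rfl⟩ := Ideal.Quotient.mk_surjective a
  rw [Ideal.Quotient.eq_zero_iff_mem, vanishIdeal]
  simp only [Ideal.mem_iInf, Set.forall_mem_range, RingHom.mem_ker]
  exact congrFun ((rangeEval_mk p q).symm.trans ha)

theorem eval_monomial_eq_of_forall_ne {ξ η : Fin d → F} {i : Fin d} (h : ∀ k ≠ i, ξ k = η k)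
    {t : Fin d →₀ ℕ} (ht : t i = 0) (a : F) :
    eval ξ (monomial t a) = eval η (monomial t a) := by
  simp only [eval_monomial]
  congr 1
  refine Finsupp.prod_congr fun k hk => ?_
  rw [h k (by rintro rfl; exact (Finsupp.mem_support_iff.1 hk) ht)]

theorem single_mem_of_span_eq_top {Ξ : Set (Fin d → F)} {O : Set (Fin d →₀ ℕ)}
    (hlow : IsLowerSet O)
    (hspan : Submodule.span F (Set.range fun t : O =>
      Ideal.Quotient.mk (vanishIdeal Ξ) (monomial (t : Fin d →₀ ℕ) (1 : F))) = ⊤)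
    {ξ η : Fin d → F} (hξ : ξ ∈ Ξ) (hη : η ∈ Ξ) {i : Fin d} (hoff : ∀ k ≠ i, ξ k = η k)
    (hi : ξ i ≠ η i) : Finsupp.single i 1 ∈ O := by
  by_contra hiO
  set φ := (quotEval Ξ hξ).toLinearMap - (quotEval Ξ hη).toLinearMap
  have hker : Submodule.span F (Set.range fun t : O =>
      Ideal.Quotient.mk (vanishIdeal Ξ) (monomial (t : Fin d →₀ ℕ) (1 : F))) ≤ LinearMap.ker φ := by
    rw [Submodule.span_le]
    rintro _ ⟨⟨t, ht⟩, rfl⟩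
    have hti : t i = 0 := by
      by_contra h
      exact hiO (hlow (Finsupp.single_le_iff.2 (Nat.one_le_iff_ne_zero.2 h)) ht)
    simp [φ, eval_monomial_eq_of_forall_ne hoff hti]
  have hX : φ (Ideal.Quotient.mk _ (X i)) = 0 := hker (hspan ▸ Submodule.mem_top)
  simp [φ, sub_eq_zero, hi] at hX

noncomputable def monomialVector {ι : Type*} (p : ι → Fin d → F) (t : Fin d →₀ ℕ) : ι → F :=
  fun j => eval (p j) (monomial t 1)

@[simp]
theorem monomialVector_zero {ι : Type*} (p : ι → Fin d → F) : monomialVector p 0 = 1 := by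
  ext j
  simp [monomialVector]

@[simp]
theorem monomialVector_single_one {ι : Type*} (p : ι → Fin d → F) (i : Fin d) :
    monomialVector p (Finsupp.single i 1) = fun j => p j i := by
  ext j
  simp [monomialVector, eval_monomial]

theorem isMOQB_range {ι : Type*} (p : ι → Fin d → F) {O : Set (Fin d →₀ ℕ)} (hfin : O.Finite)
    (hlow : IsLowerSet O) (hli : LinearIndepOn F (monomialVector p) O)
    (hspan : Submodule.span F (monomialVector p '' O) = ⊤) :
    IsMOQB (vanishIdeal (Set.range p)) O := by
  have hcomp : (rangeEval p).toLinearMap ∘ (fun t : O =>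
      Ideal.Quotient.mk (vanishIdeal (Set.range p)) (monomial (t : Fin d →₀ ℕ) (1 : F))) =
      fun t : O => monomialVector p t := by
    ext t j
    simp [monomialVector]
  refine ⟨hfin, hlow, .of_comp (rangeEval p).toLinearMap (by rwa [hcomp]), ?_⟩
  refine Submodule.span_eq_top_of_injective_of_span_comp (f := (rangeEval p).toLinearMap)
    (rangeEval_injective p) ?_
  rwa [hcomp, ← Set.image_eq_range]

end VanishingIdeal

theorem Finsupp.le_single_one_iff {ι : Type*} {b : ι →₀ ℕ} {i : ι} :
    b ≤ single i 1 ↔ b = 0 ∨ b = single i 1 := by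
  refine ⟨fun h => ?_, by rintro (rfl | rfl) <;> simp⟩
  have hoff : ∀ k ≠ i, b k = 0 := fun k hk => by simpa [hk] using h k
  rcases Nat.le_one_iff_eq_zero_or_eq_one.1 (by simpa using h i) with h0 | h1
  · left; ext k; by_cases hk : k = i <;> simp_all
  · right; ext k; by_cases hk : k = i <;> simp_all

theorem IsCartesianWith.update_mem {d : ℕ} {F : Type*} {A : Set (Fin d → ℕ)} {y : Fin d → ℕ → F}
    {Ξ : Set (Fin d → F)} (h : IsCartesianWith A y Ξ) {ξ : Fin d → F} (hξ : ξ ∈ Ξ) (i : Fin d) :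
    Function.update ξ i (y i 0) ∈ Ξ := by
  obtain ⟨hlow, -, rfl⟩ := h
  obtain ⟨α, hα, rfl⟩ := hξ
  refine ⟨Function.update α i 0, hlow (update_le_iff.2 ⟨Nat.zero_le _, fun _ _ => le_rfl⟩) hα, ?_⟩
  ext k
  by_cases hk : k = i <;> simp [hk]

section FourPoints

variable {F : Type*} [Field F] {d : ℕ} {i₀ i₁ i₂ : Fin d}

def fourPoints (i₀ i₁ i₂ : Fin d) : Fin 4 → Fin d → F :=
  ![fun _ => 0, fun k => if k = i₁ then 1 else 0, fun k => if k = i₂ then 1 else 0,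
    fun k => if k = i₀ ∨ k = i₂ then 1 else 0]

theorem range_fourPoints : Set.range (fourPoints (F := F) i₀ i₁ i₂) =
    {(fun _ => 0), (fun k => if k = i₁ then 1 else 0), (fun k => if k = i₂ then 1 else 0),
      (fun k => if k = i₀ ∨ k = i₂ then 1 else 0)} := by
  simp only [fourPoints, Matrix.range_cons, Matrix.range_empty, Set.union_empty,
    Set.singleton_union]

theorem not_isCartesian_range_fourPoints (h01 : i₀ ≠ i₁) (h02 : i₀ ≠ i₂) (h12 : i₁ ≠ i₂) :
    ¬ IsCartesian (Set.range (fourPoints (F := F) i₀ i₁ i₂)) := by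
  rintro ⟨A, y, hA⟩
  have hc₁ : y i₂ 0 = 1 := by
    obtain ⟨j, hj⟩ := hA.update_mem (Set.mem_range_self 3) i₂
    have e₀ := congrFun hj i₀
    have e₂ := congrFun hj i₂
    fin_cases j <;> simp [fourPoints, h01, h02] at e₀ e₂
    simp [e₂]
  have hc₀ : y i₂ 0 = 0 := by
    obtain ⟨j, hj⟩ := hA.update_mem (Set.mem_range_self 1) i₂
    have e₁ := congrFun hj i₁
    have e₂ := congrFun hj i₂
    fin_cases j <;> simp [fourPoints, h01.symm, h12, h12.symm] at e₁ e₂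
    simp [e₂]
  exact one_ne_zero (hc₁.symm.trans hc₀)

theorem linearIndependent_monomialVector_fourPoints (h01 : i₀ ≠ i₁) (h02 : i₀ ≠ i₂)
    (h12 : i₁ ≠ i₂) :
    LinearIndependent F (monomialVector (fourPoints (F := F) i₀ i₁ i₂) ∘
      ![0, Finsupp.single i₀ 1, Finsupp.single i₁ 1, Finsupp.single i₂ 1]) := by
  rw [Fintype.linearIndependent_iff]
  intro c hc
  have hc₀ := congrFun hc 0
  have hc₁ := congrFun hc 1
  have hc₂ := congrFun hc 2
  have hc₃ := congrFun hc 3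
  simp [Fin.sum_univ_four, fourPoints, h01, h02, h12, h01.symm, h02.symm, h12.symm]
    at hc₀ hc₁ hc₂ hc₃
  have hc₁' : c 1 = 0 := by linear_combination hc₃ - hc₂
  have hc₂' : c 2 = 0 := by linear_combination hc₁ - hc₀
  have hc₃' : c 3 = 0 := by linear_combination hc₂ - hc₀
  intro i
  fin_cases i <;> assumption

theorem isMOQB_fourPoints (h01 : i₀ ≠ i₁) (h02 : i₀ ≠ i₂) (h12 : i₁ ≠ i₂) :
    IsMOQB (vanishIdeal (Set.range (fourPoints (F := F) i₀ i₁ i₂)))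
      {0, Finsupp.single i₀ 1, Finsupp.single i₁ 1, Finsupp.single i₂ 1} := by
  set g : Fin 4 → Fin d →₀ ℕ := ![0, Finsupp.single i₀ 1, Finsupp.single i₁ 1, Finsupp.single i₂ 1]
  have hli := linearIndependent_monomialVector_fourPoints (F := F) h01 h02 h12
  have hg : Function.Injective g := hli.injective.of_comp
  have hrange :
      Set.range g = {0, Finsupp.single i₀ 1, Finsupp.single i₁ 1, Finsupp.single i₂ 1} := by
    simp only [g, Matrix.range_cons, Matrix.range_empty, Set.union_empty, Set.singleton_union]
  refine isMOQB_range _ (Set.toFinite _) ?_ ?_ ?_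
  · rintro a b hba (rfl | rfl | rfl | rfl)
    · simp [nonpos_iff_eq_zero.1 hba]
    all_goals rcases Finsupp.le_single_one_iff.1 hba with rfl | rfl <;> simp
  · rw [← hrange]
    exact (linearIndepOn_range_iff hg _).2 hli
  · rw [← hrange, ← Set.range_comp]
    exact hli.span_eq_top_of_card_eq_finrank (by simp)

theorem eq_of_isMOQB_fourPoints (h01 : i₀ ≠ i₁) (h02 : i₀ ≠ i₂) (h12 : i₁ ≠ i₂)
    {O : Set (Fin d →₀ ℕ)}
    (hO : IsMOQB (vanishIdeal (Set.range (fourPoints (F := F) i₀ i₁ i₂))) O) :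
    O = {0, Finsupp.single i₀ 1, Finsupp.single i₁ 1, Finsupp.single i₂ 1} := by
  obtain ⟨-, hlow, hli, hspan⟩ := hO
  have hΞ : ∀ j, fourPoints (F := F) i₀ i₁ i₂ j ∈ Set.range (fourPoints i₀ i₁ i₂) :=
    Set.mem_range_self
  have h₁ : Finsupp.single i₁ 1 ∈ O := single_mem_of_span_eq_top hlow hspan (hΞ 0) (hΞ 1)
    (fun k hk => by simp [fourPoints, hk]) (by simp [fourPoints])
  have h₂ : Finsupp.single i₂ 1 ∈ O := single_mem_of_span_eq_top hlow hspan (hΞ 0) (hΞ 2)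
    (fun k hk => by simp [fourPoints, hk]) (by simp [fourPoints])
  have h₀ : Finsupp.single i₀ 1 ∈ O := single_mem_of_span_eq_top hlow hspan (hΞ 2) (hΞ 3)
    (fun k hk => by simp [fourPoints, hk]) (by simp [fourPoints, h02])
  refine LinearIndepOn.eq_of_subset_of_span_eq_top
    (f := fun t => Ideal.Quotient.mk _ (monomial t (1 : F))) hli ?_ ?_
  · simp [Set.insert_subset_iff, hlow zero_le h₀, h₀, h₁, h₂]
  · rw [Set.image_eq_range]
    exact (isMOQB_fourPoints h01 h02 h12).2.2.2

end FourPoints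

theorem stmt14_general {F : Type*} [Field F] {d : ℕ}
    (i₀ i₁ i₂ : Fin d) (h₀ : (i₀ : ℕ) = 0) (h₁ : (i₁ : ℕ) = 1) (h₂ : (i₂ : ℕ) = 2) :
    ¬ IsCartesian ({(fun _ => 0), (fun k => if k = i₁ then 1 else 0),
          (fun k => if k = i₂ then 1 else 0),
          (fun k => if k = i₀ ∨ k = i₂ then 1 else 0)} : Set (Fin d → F)) ∧
    IsMOQB
      (vanishIdeal ({(fun _ => 0), (fun k => if k = i₁ then 1 else 0),
          (fun k => if k = i₂ then 1 else 0),
          (fun k => if k = i₀ ∨ k = i₂ then 1 else 0)} : Set (Fin d → F)))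
      ({0, Finsupp.single i₀ 1, Finsupp.single i₁ 1, Finsupp.single i₂ 1} :
        Set (Fin d →₀ ℕ)) ∧
    ∀ O : Set (Fin d →₀ ℕ),
      IsMOQB
        (vanishIdeal ({(fun _ => 0), (fun k => if k = i₁ then 1 else 0),
            (fun k => if k = i₂ then 1 else 0),
            (fun k => if k = i₀ ∨ k = i₂ then 1 else 0)} : Set (Fin d → F))) O →
      O = ({0, Finsupp.single i₀ 1, Finsupp.single i₁ 1, Finsupp.single i₂ 1} :
        Set (Fin d →₀ ℕ)) := by
  have h01 : i₀ ≠ i₁ := Fin.ne_of_val_ne (by omega)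
  have h02 : i₀ ≠ i₂ := Fin.ne_of_val_ne (by omega)
  have h12 : i₁ ≠ i₂ := Fin.ne_of_val_ne (by omega)
  rw [← range_fourPoints]
  exact ⟨not_isCartesian_range_fourPoints h01 h02 h12, isMOQB_fourPoints h01 h02 h12,
    fun O hO => eq_of_isMOQB_fourPoints h01 h02 h12 hO⟩

/-- For `d ≥ 3`, the four-point set
`Ξ_d = {(0,0,0,0,…,0), (0,1,0,0,…,0), (0,0,1,0,…,0), (1,0,1,0,…,0)} ⊆ F^d`
(coordinates indexed by `i₀, i₁, i₂`, the first three indices) is not Cartesian, and its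
vanishing ideal has a unique monomial order quotient basis, namely `{1, x₁, x₂, x₃}`. -/
theorem stmt14 {F : Type*} [Field F] [CharZero F] {d : ℕ} (hd : 3 ≤ d)
    (i₀ i₁ i₂ : Fin d) (h₀ : (i₀ : ℕ) = 0) (h₁ : (i₁ : ℕ) = 1) (h₂ : (i₂ : ℕ) = 2) :
    ¬ IsCartesian ({(fun _ => 0), (fun k => if k = i₁ then 1 else 0),
          (fun k => if k = i₂ then 1 else 0),
          (fun k => if k = i₀ ∨ k = i₂ then 1 else 0)} : Set (Fin d → F)) ∧
    IsMOQB
      (vanishIdeal ({(fun _ => 0), (fun k => if k = i₁ then 1 else 0),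
          (fun k => if k = i₂ then 1 else 0),
          (fun k => if k = i₀ ∨ k = i₂ then 1 else 0)} : Set (Fin d → F)))
      ({0, Finsupp.single i₀ 1, Finsupp.single i₁ 1, Finsupp.single i₂ 1} :
        Set (Fin d →₀ ℕ)) ∧
    ∀ O : Set (Fin d →₀ ℕ),
      IsMOQB
        (vanishIdeal ({(fun _ => 0), (fun k => if k = i₁ then 1 else 0),
            (fun k => if k = i₂ then 1 else 0),
            (fun k => if k = i₀ ∨ k = i₂ then 1 else 0)} : Set (Fin d → F))) O →
      O = ({0, Finsupp.single i₀ 1, Finsupp.single i₁ 1, Finsupp.single i₂ 1} :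
        Set (Fin d →₀ ℕ)) :=
  stmt14_general i₀ i₁ i₂ h₀ h₁ h₂
end
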